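/- arXiv:1910.09855 — 2 statements merged into one kernel-verified Lean document; each statement's English description precedes it below -/
import Mathlib

section
/- Let (Ω, F, P) be a finite probability space with a filtration G₀ ⊆ G₁ ⊆ … ⊆ G_{n−1} ⊆ F, let S₀, …, Sₙ be real random variables, Λ > 0, and let Z be a real random variable. Suppose y ∈ ℝ and γ₀, …, γ_{n−1} are real random variables with each γᵢ measurable with respect to Gᵢ (and γ_{−1} := 0) such that y + Σ_{i=0}^{n−1} ( γᵢ (S_{i+1} − Sᵢ) − Λ (γᵢ − γ_{i−1})² ) ≥ Z holds everywhere on Ω. Then y ≥ E_P[ Z − (1/(4Λ)) Σ_{i=0}^{n−1} ( E_P[Sₙ | Gᵢ] − Sᵢ )² ]. -/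
open MeasureTheory Finset

lemma myIntegrable {Ω : Type*} [Fintype Ω] [m : MeasurableSpace Ω]
    (P : Measure Ω) [IsFiniteMeasure P] {f : Ω → ℝ} (hf : Measurable f) :
    Integrable f P := by
  have : ∃ C, ∀ ω, ‖f ω‖ ≤ C := by
    cases isEmpty_or_nonempty Ω with
    | inl h => exact ⟨0, fun ω => (IsEmpty.false ω).elim⟩
    | inr h => exact ⟨Finset.univ.sup' Finset.univ_nonempty (fun ω => ‖f ω‖),
        fun ω => Finset.le_sup' (fun ω => ‖f ω‖) (Finset.mem_univ ω)⟩
  obtain ⟨C, hC⟩ := this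
  exact ⟨hf.aestronglyMeasurable, HasFiniteIntegral.of_bounded (ae_of_all _ hC)⟩

lemma mySumB (g : ℕ → ℝ) (n : ℕ) :
    ∑ i ∈ range (n + 1), (g i - (if i = 0 then 0 else g (i - 1))) = g n := by
  induction n with
  | zero => simp
  | succ k ih =>
      rw [Finset.sum_range_succ, ih]
      simp

lemma myAbel (g s : ℕ → ℝ) (n : ℕ) :
    ∑ i ∈ range n, g i * (s (i + 1) - s i)
      = ∑ i ∈ range n, (g i - (if i = 0 then 0 else g (i - 1))) * (s n - s i) := by
  induction n with
  | zero => simp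
  | succ k ih =>
      have h1 : ∀ i, (g i - (if i = 0 then 0 else g (i - 1))) * (s (k + 1) - s i)
          = (g i - (if i = 0 then 0 else g (i - 1))) * (s k - s i)
            + (g i - (if i = 0 then 0 else g (i - 1))) * (s (k + 1) - s k) := by
        intro i; ring
      calc ∑ i ∈ range (k + 1), g i * (s (i + 1) - s i)
          = (∑ i ∈ range k, g i * (s (i + 1) - s i)) + g k * (s (k + 1) - s k) := by
            rw [Finset.sum_range_succ]
        _ = (∑ i ∈ range k, (g i - (if i = 0 then 0 else g (i - 1))) * (s k - s i))
              + g k * (s (k + 1) - s k) := by rw [ih]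
        _ = (∑ i ∈ range (k + 1), (g i - (if i = 0 then 0 else g (i - 1))) * (s k - s i))
              + (∑ i ∈ range (k + 1), (g i - (if i = 0 then 0 else g (i - 1))))
                * (s (k + 1) - s k) := by
            rw [Finset.sum_range_succ, mySumB]; ring
        _ = ∑ i ∈ range (k + 1), (g i - (if i = 0 then 0 else g (i - 1))) * (s (k + 1) - s i) := by
            rw [Finset.sum_mul, ← Finset.sum_add_distrib]
            exact Finset.sum_congr rfl fun i _ => (h1 i).symm

theorem stmt_7 {Ω : Type*} [Fintype Ω] [m : MeasurableSpace Ω]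
    (P : Measure Ω) [IsProbabilityMeasure P]
    (n : ℕ) (G : ℕ → MeasurableSpace Ω)
    (hGle : ∀ i, G i ≤ m) (hGmono : ∀ i j, i ≤ j → G i ≤ G j)
    (S : ℕ → Ω → ℝ) (hSmeas : ∀ i, Measurable (S i))
    (Λ : ℝ) (hΛ : 0 < Λ) (Z : Ω → ℝ) (hZ : Measurable Z)
    (y : ℝ) (γ : ℕ → Ω → ℝ) (hγ : ∀ i, Measurable[G i] (γ i))
    (hsuper : ∀ ω, y + ∑ i ∈ range n,
        (γ i ω * (S (i + 1) ω - S i ω) -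
          Λ * (γ i ω - (if i = 0 then 0 else γ (i - 1) ω)) ^ 2) ≥ Z ω) :
    y ≥ ∫ ω,
        (Z ω - (1 / (4 * Λ)) *
          ∑ i ∈ range n, ((P[S n | G i]) ω - S i ω) ^ 2) ∂P := by
  classical
  set b : ℕ → Ω → ℝ := fun i ω => γ i ω - (if i = 0 then 0 else γ (i - 1) ω) with hbdef
  set a : ℕ → Ω → ℝ := fun i ω => (P[S n | G i]) ω - S i ω with hadef
  -- measurability facts
  have hmγ : ∀ i, Measurable (γ i) := fun i => (hγ i).mono (hGle i) le_rfl
  have hbG : ∀ i, Measurable[G i] (b i) := by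
    intro i
    rcases Nat.eq_zero_or_pos i with h0 | h0
    · subst h0
      simpa [hbdef] using hγ 0
    · have : Measurable[G i] (γ (i - 1)) :=
        (hγ (i - 1)).mono (hGmono (i - 1) i (Nat.sub_le i 1)) le_rfl
      have hne : i ≠ 0 := Nat.pos_iff_ne_zero.mp h0
      simp [hbdef, hne]; exact (hγ i).sub this
  have hmb : ∀ i, Measurable (b i) := fun i => (hbG i).mono (hGle i) le_rfl
  have hmc : ∀ i, Measurable (P[S n | G i]) := fun i =>
    (stronglyMeasurable_condExp.mono (hGle i)).measurable
  have hma : ∀ i, Measurable (a i) := fun i => (hmc i).sub (hSmeas i)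
  -- key conditional expectation identity
  have hkey : ∀ i, ∫ ω, b i ω * (S n ω - S i ω) ∂P = ∫ ω, b i ω * a i ω ∂P := by
    intro i
    have h1 : ∫ ω, b i ω * S n ω ∂P = ∫ ω, b i ω * (P[S n | G i]) ω ∂P := by
      have hint : Integrable (fun ω => b i ω * S n ω) P :=
        myIntegrable P ((hmb i).mul (hSmeas n))
      have hIS : Integrable (S n) P := myIntegrable P (hSmeas n)
      have hpull := condExp_mul_of_stronglyMeasurable_left (μ := P) (m := G i)
        (hbG i).stronglyMeasurable hint hIS
      calc ∫ ω, b i ω * S n ω ∂P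
          = ∫ ω, (P[(fun ω => b i ω * S n ω) | G i]) ω ∂P :=
            (integral_condExp (hGle i)).symm
        _ = ∫ ω, b i ω * (P[S n | G i]) ω ∂P := integral_congr_ae hpull
    have e1 : ∀ ω, b i ω * (S n ω - S i ω) = b i ω * S n ω - b i ω * S i ω := by
      intro ω; ring
    have e2 : ∀ ω, b i ω * a i ω = b i ω * (P[S n | G i]) ω - b i ω * S i ω := by
      intro ω; simp [hadef]; ring
    simp only [e1, e2]
    rw [integral_sub (myIntegrable P (f := fun ω => b i ω * S n ω) ((hmb i).mul (hSmeas n)))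
        (myIntegrable P (f := fun ω => b i ω * S i ω) ((hmb i).mul (hSmeas i))),
      integral_sub (myIntegrable P (f := fun ω => b i ω * (P[S n | G i]) ω) ((hmb i).mul (hmc i)))
        (myIntegrable P (f := fun ω => b i ω * S i ω) ((hmb i).mul (hSmeas i))), h1]
  -- integrate the superreplication inequality
  have hgain : ∀ ω, ∑ i ∈ range n,
      (γ i ω * (S (i + 1) ω - S i ω) - Λ * (b i ω) ^ 2)
      = ∑ i ∈ range n, (b i ω * (S n ω - S i ω) - Λ * (b i ω) ^ 2) := by
    intro ω
    have := myAbel (fun i => γ i ω) (fun i => S i ω) n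
    simp only [Finset.sum_sub_distrib]
    rw [this]
  have hintZ : Integrable Z P := myIntegrable P hZ
  have hintTerm : ∀ i, Integrable (fun ω => b i ω * (S n ω - S i ω) - Λ * (b i ω) ^ 2) P := by
    intro i
    exact myIntegrable P (((hmb i).mul ((hSmeas n).sub (hSmeas i))).sub
      (measurable_const.mul ((hmb i).pow measurable_const)))
  have hintSum : Integrable (fun ω => ∑ i ∈ range n,
      (b i ω * (S n ω - S i ω) - Λ * (b i ω) ^ 2)) P :=
    integrable_finset_sum _ fun i _ => hintTerm i
  have step1 : ∫ ω, Z ω ∂P ≤ y + ∑ i ∈ range n,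
      ∫ ω, (b i ω * (S n ω - S i ω) - Λ * (b i ω) ^ 2) ∂P := by
    have hle : ∫ ω, Z ω ∂P ≤ ∫ ω, (y + ∑ i ∈ range n,
        (b i ω * (S n ω - S i ω) - Λ * (b i ω) ^ 2)) ∂P := by
      apply integral_mono hintZ ((integrable_const y).add hintSum)
      intro ω
      have h := hsuper ω
      simp only [Pi.add_apply]
      rw [← hgain ω]
      exact h
    rwa [integral_add (integrable_const y) hintSum, integral_const,
      probReal_univ, smul_eq_mul, one_mul,
      integral_finset_sum _ (fun i _ => hintTerm i)] at hle
  -- bound each term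
  have step2 : ∀ i, ∫ ω, (b i ω * (S n ω - S i ω) - Λ * (b i ω) ^ 2) ∂P
      ≤ (1 / (4 * Λ)) * ∫ ω, (a i ω) ^ 2 ∂P := by
    intro i
    have hsplit : ∫ ω, (b i ω * (S n ω - S i ω) - Λ * (b i ω) ^ 2) ∂P
        = ∫ ω, b i ω * (S n ω - S i ω) ∂P - ∫ ω, Λ * (b i ω) ^ 2 ∂P :=
      integral_sub (myIntegrable P ((hmb i).mul ((hSmeas n).sub (hSmeas i))))
        (myIntegrable P (measurable_const.mul ((hmb i).pow measurable_const)))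
    rw [hsplit, hkey i, ← integral_sub (myIntegrable P (f := fun ω => b i ω * a i ω) ((hmb i).mul (hma i)))
        (myIntegrable P (f := fun ω => Λ * b i ω ^ 2) (measurable_const.mul ((hmb i).pow measurable_const))),
      ← integral_const_mul]
    apply integral_mono
      (myIntegrable P (((hmb i).mul (hma i)).sub
        (measurable_const.mul ((hmb i).pow measurable_const))))
      (myIntegrable P (measurable_const.mul ((hma i).pow measurable_const)))
    intro ω
    have h4 : (0:ℝ) < 4 * Λ := by linarith
    show b i ω * a i ω - Λ * b i ω ^ 2 ≤ 1 / (4 * Λ) * a i ω ^ 2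
    rw [show (1 / (4 * Λ)) * a i ω ^ 2 = a i ω ^ 2 / (4 * Λ) by ring, le_div_iff₀ h4]
    nlinarith [sq_nonneg (a i ω - 2 * Λ * b i ω)]
  -- conclude
  have hrhs : ∫ ω, (Z ω - (1 / (4 * Λ)) * ∑ i ∈ range n, (a i ω) ^ 2) ∂P
      = ∫ ω, Z ω ∂P - (1 / (4 * Λ)) * ∑ i ∈ range n, ∫ ω, (a i ω) ^ 2 ∂P := by
    have hintsq : ∀ i, Integrable (fun ω => (a i ω) ^ 2) P := fun i =>
      myIntegrable P ((hma i).pow measurable_const)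
    rw [integral_sub hintZ]
    · rw [integral_const_mul, integral_finset_sum _ (fun i _ => hintsq i)]
    · exact (integrable_finset_sum _ fun i _ => hintsq i).const_mul _
  have hZle : ∫ ω, Z ω ∂P ≤ y + (1 / (4 * Λ)) * ∑ i ∈ range n, ∫ ω, (a i ω) ^ 2 ∂P := by
    calc ∫ ω, Z ω ∂P ≤ y + ∑ i ∈ range n,
          ∫ ω, (b i ω * (S n ω - S i ω) - Λ * (b i ω) ^ 2) ∂P := step1
      _ ≤ y + ∑ i ∈ range n, (1 / (4 * Λ)) * ∫ ω, (a i ω) ^ 2 ∂P := by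
          gcongr with i hi
          exact step2 i
      _ = y + (1 / (4 * Λ)) * ∑ i ∈ range n, ∫ ω, (a i ω) ^ 2 ∂P := by
          rw [Finset.mul_sum]
  rw [show (fun ω => Z ω - (1 / (4 * Λ)) * ∑ i ∈ range n, ((P[S n | G i]) ω - S i ω) ^ 2)
      = fun ω => Z ω - (1 / (4 * Λ)) * ∑ i ∈ range n, (a i ω) ^ 2 from rfl] at *
  rw [ge_iff_le, hrhs]
  linarith
end

section
/- Let 0 < σ̲ ≤ σ̄, Λ > 0, and let G be the piecewise function G(z) = (σ̲ − z/σ̲)² for 0 ≤ z < σ̲², G(z) = 0 for σ̲² ≤ z ≤ σ̄², G(z) = (z/σ̄ − σ̄)² for z > σ̄². Then for every a ≥ 0 and every b ∈ [σ̲², σ̄²], (a − b)²/(16Λb) ≥ G(a)/(16Λ). -/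
theorem stmt_17 (σl σu Λ : ℝ) (h0 : 0 < σl) (hle : σl ≤ σu) (hΛ : 0 < Λ)
    (G : ℝ → ℝ)
    (hG : ∀ z : ℝ, 0 ≤ z →
      G z = if z < σl ^ 2 then (σl - z / σl) ^ 2
            else if z ≤ σu ^ 2 then 0
            else (z / σu - σu) ^ 2) :
    ∀ a : ℝ, 0 ≤ a → ∀ b ∈ Set.Icc (σl ^ 2) (σu ^ 2),
      (a - b) ^ 2 / (16 * Λ * b) ≥ G a / (16 * Λ) := by
  intro a ha b hb
  obtain ⟨hb1, hb2⟩ := hb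
  have hu : 0 < σu := lt_of_lt_of_le h0 hle
  have hbpos : 0 < b := lt_of_lt_of_le (pow_pos h0 2) hb1
  rw [ge_iff_le, hG a ha, div_le_div_iff₀ (by positivity) (by positivity)]
  split_ifs with h1 h2
  · have key : σl - a / σl = (σl ^ 2 - a) / σl := by field_simp
    rw [key, div_pow]
    rw [div_mul_eq_mul_div, div_le_iff₀ (by positivity)]
    have ha2 : a ^ 2 ≤ σl ^ 2 * b := by
      nlinarith [sq_nonneg a]
    nlinarith [mul_nonneg (sub_nonneg.2 hb1) (sub_nonneg.2 ha2), hΛ.le, mul_pos hΛ hbpos]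
  · nlinarith [sq_nonneg (a - b), mul_pos hΛ hbpos]
  · push_neg at h2
    have key : a / σu - σu = (a - σu ^ 2) / σu := by field_simp
    rw [key, div_pow]
    rw [div_mul_eq_mul_div, div_le_iff₀ (by positivity)]
    have ha2 : σu ^ 2 * b ≤ a ^ 2 := by nlinarith
    nlinarith [mul_nonneg (sub_nonneg.2 hb2) (sub_nonneg.2 ha2), hΛ.le]
end
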